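/- Let A and B be C*-algebras, let π : A → B be a *-homomorphism and let σ : A → B be an anti-*-homomorphism whose ranges are orthogonal, i.e., π(x)σ(y) = 0 and σ(y)π(x) = 0 for all x, y ∈ A, and set J = π + σ (so J is a Jordan *-homomorphism). If J is completely bounded with constant C ≥ 0, i.e., for every k ≥ 1 and every k×k matrix a = (a_{ij}) over A one has ‖(J(a_{ij}))_{ij}‖ ≤ C‖a‖, then σ is completely bounded with the same constant C: for every k ≥ 1 and every k×k matrix a = (a_{ij}) over A, ‖(σ(a_{ij}))_{ij}‖ ≤ C‖a‖. -/

import Mathlib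

open scoped Matrix

/-- The operator on the Hilbert space `ℓ²(Fin k; H)` induced by a `k × k` matrix of bounded
operators on a Hilbert space `H`. -/
noncomputable def Matrix.toPiLpCLM {H : Type*} [NormedAddCommGroup H] [InnerProductSpace ℂ H]
    {k : ℕ} (a : Matrix (Fin k) (Fin k) (H →L[ℂ] H)) :
    (PiLp 2 fun _ : Fin k => H) →L[ℂ] (PiLp 2 fun _ : Fin k => H) :=
  ((PiLp.continuousLinearEquiv 2 ℂ (fun _ : Fin k => H)).symm.toContinuousLinearMap) ∘L
    (ContinuousLinearMap.pi fun i => ∑ j, (a i j) ∘L ContinuousLinearMap.proj j) ∘L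
    ((PiLp.continuousLinearEquiv 2 ℂ (fun _ : Fin k => H)).toContinuousLinearMap)

/-- The (unique) C*-norm of a `k × k` matrix of bounded operators on a Hilbert space `H`:
the operator norm of the induced operator on the Hilbert space `ℓ²(Fin k; H)`.  For a matrix
over an abstract C*-algebra, the C*-norm is obtained by applying a faithful representation
entrywise and then taking this norm. -/
noncomputable def Matrix.cstarNorm {H : Type*} [NormedAddCommGroup H] [InnerProductSpace ℂ H]
    {k : ℕ} (a : Matrix (Fin k) (Fin k) (H →L[ℂ] H)) : ℝ :=
  ‖a.toPiLpCLM‖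

/-
The matrices `p = (ρB (π aᵢⱼ))` and `c = (ρB (σ aᵢⱼ))` satisfy `star (p i j) * c i l = 0`, because
`star (π x) * σ y = π (star x) * σ y = 0`. Hence for every vector `v` the vectors `p v` and `c v`
are orthogonal, so `‖c v‖ ≤ ‖(p + c) v‖` by Pythagoras, and `‖c‖ ≤ ‖p + c‖`; the matrix `p + c` is
the image of `a` under `J = π + σ`.
-/

lemma ContinuousLinearMap.opNorm_le_opNorm_add_of_inner_eq_zero {E F : Type*}
    [NormedAddCommGroup E] [InnerProductSpace ℂ E] [NormedAddCommGroup F] [InnerProductSpace ℂ F]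
    {S T : E →L[ℂ] F} (hST : ∀ v, inner ℂ (S v) (T v) = 0) : ‖T‖ ≤ ‖S + T‖ := by
  refine opNorm_le_bound _ (norm_nonneg _) fun v => ?_
  have pythagoras : ‖(S + T) v‖ ^ 2 = ‖S v‖ ^ 2 + ‖T v‖ ^ 2 := by
    rw [_root_.add_apply, norm_add_sq (𝕜 := ℂ), hST, map_zero, mul_zero, add_zero]
  have : ‖T v‖ ≤ ‖(S + T) v‖ :=
    le_of_sq_le_sq (by rw [pythagoras]; exact le_add_of_nonneg_left (sq_nonneg _)) (norm_nonneg _)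
  exact this.trans (le_opNorm _ v)

namespace Matrix

variable {H : Type*} [NormedAddCommGroup H] [InnerProductSpace ℂ H] {k : ℕ}

lemma toPiLpCLM_apply (a : Matrix (Fin k) (Fin k) (H →L[ℂ] H)) (v : PiLp 2 fun _ : Fin k => H)
    (i : Fin k) : a.toPiLpCLM v i = ∑ j, a i j (v j) := by
  simp [toPiLpCLM]

lemma toPiLpCLM_add (a b : Matrix (Fin k) (Fin k) (H →L[ℂ] H)) :
    (a + b).toPiLpCLM = a.toPiLpCLM + b.toPiLpCLM := by
  ext v i
  simp only [_root_.add_apply, PiLp.add_apply, toPiLpCLM_apply, add_apply,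
    Finset.sum_add_distrib]

lemma inner_toPiLpCLM_eq_zero_of_star_mul_eq_zero [CompleteSpace H]
    {a b : Matrix (Fin k) (Fin k) (H →L[ℂ] H)} (hab : ∀ i j l, star (a i j) * b i l = 0)
    (v w : PiLp 2 fun _ : Fin k => H) : inner ℂ (a.toPiLpCLM v) (b.toPiLpCLM w) = 0 := by
  simp only [PiLp.inner_apply, toPiLpCLM_apply, sum_inner, inner_sum]
  refine Finset.sum_eq_zero fun i _ => Finset.sum_eq_zero fun j _ =>
    Finset.sum_eq_zero fun l _ => ?_
  rw [← ContinuousLinearMap.adjoint_inner_right, ← ContinuousLinearMap.star_eq_adjoint,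
    ← mul_apply_eq_comp, hab, _root_.zero_apply, inner_zero_right]

lemma cstarNorm_le_cstarNorm_add_of_star_mul_eq_zero [CompleteSpace H]
    {a b : Matrix (Fin k) (Fin k) (H →L[ℂ] H)}
    (hab : ∀ i j l, star (a i j) * b i l = 0) : b.cstarNorm ≤ (a + b).cstarNorm := by
  rw [cstarNorm, cstarNorm, toPiLpCLM_add]
  exact ContinuousLinearMap.opNorm_le_opNorm_add_of_inner_eq_zero
    fun v => inner_toPiLpCLM_eq_zero_of_star_mul_eq_zero hab v v

end Matrix

theorem anti_part_cb_of_jordan_star_hom_cb_general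
    {A B HA HB : Type*} [CStarAlgebra A] [CStarAlgebra B]
    [NormedAddCommGroup HA] [InnerProductSpace ℂ HA] [CompleteSpace HA]
    [NormedAddCommGroup HB] [InnerProductSpace ℂ HB] [CompleteSpace HB]
    (ρA : A →⋆ₐ[ℂ] (HA →L[ℂ] HA))
    (ρB : B →⋆ₐ[ℂ] (HB →L[ℂ] HB))
    (π σ : A →ₗ[ℂ] B)
    (hπstar : ∀ x : A, π (star x) = star (π x))
    (horth : ∀ x y : A, π x * σ y = 0 ∧ σ y * π x = 0)
    (C : ℝ)
    (hcb : ∀ k : ℕ, 1 ≤ k → ∀ a : Matrix (Fin k) (Fin k) A,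
      Matrix.cstarNorm ((a.map fun x => π x + σ x).map ⇑ρB) ≤
        C * Matrix.cstarNorm (a.map ⇑ρA)) :
    ∀ k : ℕ, 1 ≤ k → ∀ a : Matrix (Fin k) (Fin k) A,
      Matrix.cstarNorm ((a.map ⇑σ).map ⇑ρB) ≤ C * Matrix.cstarNorm (a.map ⇑ρA) := by
  intro k hk a
  have hJ : (a.map fun x => π x + σ x).map ⇑ρB = (a.map ⇑π).map ⇑ρB + (a.map ⇑σ).map ⇑ρB := by
    ext i j
    simp only [Matrix.map_apply, Matrix.add_apply, map_add]
  have horth_star : ∀ i j l, star (((a.map ⇑π).map ⇑ρB) i j) * ((a.map ⇑σ).map ⇑ρB) i l = 0 := by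
    intro i j l
    simp only [Matrix.map_apply]
    rw [← map_star, ← map_mul, ← hπstar, (horth _ _).1, map_zero]
  calc Matrix.cstarNorm ((a.map ⇑σ).map ⇑ρB)
      ≤ Matrix.cstarNorm ((a.map fun x => π x + σ x).map ⇑ρB) := by
        rw [hJ]; exact Matrix.cstarNorm_le_cstarNorm_add_of_star_mul_eq_zero horth_star
    _ ≤ C * Matrix.cstarNorm (a.map ⇑ρA) := hcb k hk a

/-- If `J = π + σ` is a Jordan *-homomorphism with `π` a *-homomorphism and `σ` an
anti-*-homomorphism whose ranges are orthogonal, and `J` is completely bounded with constant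
`C ≥ 0`, then `σ` is completely bounded with the same constant `C`.  Matrix C*-norms are
computed via the given faithful representations `ρA` and `ρB`. -/
theorem anti_part_cb_of_jordan_star_hom_cb
    {A B HA HB : Type*} [CStarAlgebra A] [CStarAlgebra B]
    [NormedAddCommGroup HA] [InnerProductSpace ℂ HA] [CompleteSpace HA]
    [NormedAddCommGroup HB] [InnerProductSpace ℂ HB] [CompleteSpace HB]
    (ρA : A →⋆ₐ[ℂ] (HA →L[ℂ] HA)) (hρA : Function.Injective ρA)
    (ρB : B →⋆ₐ[ℂ] (HB →L[ℂ] HB)) (hρB : Function.Injective ρB)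
    (π σ : A →ₗ[ℂ] B)
    (hπmul : ∀ x y : A, π (x * y) = π x * π y)
    (hπstar : ∀ x : A, π (star x) = star (π x))
    (hσmul : ∀ x y : A, σ (x * y) = σ y * σ x)
    (hσstar : ∀ x : A, σ (star x) = star (σ x))
    (horth : ∀ x y : A, π x * σ y = 0 ∧ σ y * π x = 0)
    (C : ℝ) (hC : 0 ≤ C)
    (hcb : ∀ k : ℕ, 1 ≤ k → ∀ a : Matrix (Fin k) (Fin k) A,
      Matrix.cstarNorm ((a.map fun x => π x + σ x).map ⇑ρB) ≤
        C * Matrix.cstarNorm (a.map ⇑ρA)) :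
    ∀ k : ℕ, 1 ≤ k → ∀ a : Matrix (Fin k) (Fin k) A,
      Matrix.cstarNorm ((a.map ⇑σ).map ⇑ρB) ≤ C * Matrix.cstarNorm (a.map ⇑ρA) :=
  anti_part_cb_of_jordan_star_hom_cb_general ρA ρB π σ hπstar horth C hcb
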